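/- Let N ≥ 3 and b > 0, and let W(x) = (1 + |x|^{2+b}/((N+b)(N−2)))^{−(N−2)/(2+b)}. Then ‖∇W‖_{L²}² = ∫_{ℝ^N} |x|^b W(x)^{(2N+2b)/(N−2)} dx, and consequently the energy E(W) = ½‖∇W‖_{L²}² − [(N−2)/(2N+2b)] ∫_{ℝ^N} |x|^b W(x)^{(2N+2b)/(N−2)} dx satisfies E(W) = [(b+2)/(2N+2b)] ‖∇W‖_{L²}². -/

import Mathlib

open MeasureTheory Filter
open scoped ENNReal NNReal BigOperators

noncomputable section

abbrev Euc (N : ℕ) := EuclideanSpace ℝ (Fin N)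

/-- `L²` norm of the gradient: `(∫ |∇f|²)^{1/2}` with `|∇f|² = ∑ᵢ |∂ᵢ f|²`. -/
noncomputable def gradL2norm {N : ℕ} {F : Type*} [NormedAddCommGroup F] [NormedSpace ℝ F]
    (f : Euc N → F) : ℝ :=
  Real.sqrt (∫ x : Euc N, ∑ i : Fin N, ‖fderiv ℝ f x (EuclideanSpace.single i 1)‖ ^ 2)

/-- The explicit energy-critical ground state
`W(x) = (1 + |x|^{2+b}/((N+b)(N-2)))^{-(N-2)/(2+b)}`. -/
noncomputable def Wfun (N : ℕ) (b : ℝ) (x : Euc N) : ℝ :=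
  (1 + ‖x‖ ^ (2 + b) / (((N : ℝ) + b) * ((N : ℝ) - 2))) ^ (-(((N : ℝ) - 2) / (2 + b)))

/-- The energy-critical energy functional
`E(f) = ½‖∇f‖² - ((N-2)/(2N+2b)) ∫ |x|^b |f|^{(2N+2b)/(N-2)}`. -/
noncomputable def energyCrit (N : ℕ) (b : ℝ) (f : Euc N → ℝ) : ℝ :=
  (1 / 2) * gradL2norm f ^ 2 -
    (((N : ℝ) - 2) / (2 * (N : ℝ) + 2 * b)) *
      ∫ x : Euc N, ‖x‖ ^ b * |f x| ^ ((2 * (N : ℝ) + 2 * b) / ((N : ℝ) - 2))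

/-!
Put `A(r) = 1 + r^{2+b}/((N+b)(N-2))` and `β = 2(N+b)/(2+b)`. Both `|∇W|²` and
`|x|^b W^{(2N+2b)/(N-2)}` are radial, namely `r^{2b+2} A(r)^{-β}/(N+b)²` and `r^b A(r)^{-β}`, so in
polar coordinates the Pohozaev identity is the one-dimensional identity
`∫₀^∞ r^{N+2b+1} A^{-β} dr = (N+b)² ∫₀^∞ r^{N+b-1} A^{-β} dr`. It is the integration by parts
`∫₀^∞ (r^{N+b} A^{1-β})' dr = 0`: the boundary term vanishes at `0` and decays like `r^{2-N}` at
infinity. The energy identity then follows by eliminating the potential term.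
-/

open Set Topology

section PowerProfile

variable {p c : ℝ}

lemma one_add_rpow_div_rpow_neg_le_one {r s : ℝ} (hc : 0 ≤ c) (hr : 0 ≤ r) (hs : 0 ≤ s) :
    (1 + r ^ p / c) ^ (-s) ≤ 1 :=
  Real.rpow_le_one_of_one_le_of_nonpos (le_add_of_nonneg_right (by positivity))
    (neg_nonpos.2 hs)

lemma one_add_rpow_div_rpow_neg_le {r s : ℝ} (hc : 0 < c) (hr : 0 < r) (hs : 0 ≤ s) :
    (1 + r ^ p / c) ^ (-s) ≤ c ^ s * r ^ (-(p * s)) :=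
  calc (1 + r ^ p / c) ^ (-s) ≤ (r ^ p / c) ^ (-s) :=
        Real.rpow_le_rpow_of_nonpos (by positivity) (le_add_of_nonneg_left zero_le_one)
          (neg_nonpos.2 hs)
    _ = c ^ s * r ^ (-(p * s)) := by
        rw [Real.div_rpow (by positivity) hc.le, ← Real.rpow_mul hr.le, Real.rpow_neg hc.le,
          div_inv_eq_mul, mul_comm, mul_neg]

lemma continuousOn_rpow_mul_one_add_rpow_div_rpow (hc : 0 ≤ c) (e s : ℝ) :
    ContinuousOn (fun r : ℝ => r ^ e * (1 + r ^ p / c) ^ s) (Ioi 0) := by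
  intro r (hr : 0 < r)
  have hA : 0 < 1 + r ^ p / c := by positivity
  exact ((Real.continuousAt_rpow_const r e (.inl hr.ne')).mul
    ((continuousAt_const.add ((Real.continuousAt_rpow_const r p (.inl hr.ne')).div_const c)
      ).rpow_const (.inl hA.ne'))).continuousWithinAt

lemma integrableOn_rpow_mul_one_add_rpow_div_rpow_neg {e β : ℝ} (hc : 0 < c) (hβ : 0 ≤ β)
    (he : -1 < e) (hdecay : e - p * β < -1) :
    IntegrableOn (fun r : ℝ => r ^ e * (1 + r ^ p / c) ^ (-β)) (Ioi 0) := by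
  have hcont := continuousOn_rpow_mul_one_add_rpow_div_rpow (p := p) hc.le e (-β)
  rw [← Ioc_union_Ioi_eq_Ioi zero_le_one]
  refine IntegrableOn.union ?_ ?_
  · have hpow : IntegrableOn (fun r : ℝ => r ^ e) (Ioc 0 1) :=
      (intervalIntegrable_iff_integrableOn_Ioc_of_le zero_le_one).1
        (intervalIntegral.intervalIntegrable_rpow' he)
    refine hpow.mono' ((hcont.mono Ioc_subset_Ioi_self).aestronglyMeasurable measurableSet_Ioc)
      ((ae_restrict_iff' measurableSet_Ioc).2 (.of_forall fun r hr => ?_))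
    have hr : 0 < r := hr.1
    rw [Real.norm_of_nonneg (by positivity)]
    exact mul_le_of_le_one_right (by positivity) (one_add_rpow_div_rpow_neg_le_one hc.le hr.le hβ)
  · have hpow : IntegrableOn (fun r : ℝ => c ^ β * r ^ (e - p * β)) (Ioi 1) :=
      (integrableOn_Ioi_rpow_of_lt hdecay zero_lt_one).const_mul _
    refine hpow.mono' ((hcont.mono (Ioi_subset_Ioi zero_le_one)).aestronglyMeasurable
      measurableSet_Ioi) ((ae_restrict_iff' measurableSet_Ioi).2 (.of_forall fun r hr => ?_))
    have hr : 0 < r := zero_lt_one.trans hr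
    rw [Real.norm_of_nonneg (by positivity)]
    calc r ^ e * (1 + r ^ p / c) ^ (-β) ≤ r ^ e * (c ^ β * r ^ (-(p * β))) :=
          mul_le_mul_of_nonneg_left (one_add_rpow_div_rpow_neg_le hc hr hβ) (by positivity)
      _ = c ^ β * r ^ (e - p * β) := by
          rw [mul_left_comm, ← Real.rpow_add hr, sub_eq_add_neg]

lemma hasDerivAt_rpow_mul_one_add_rpow_div_rpow {α β r : ℝ} (hc : 0 < c) (hr : 0 < r) :
    HasDerivAt (fun r : ℝ => r ^ α * (1 + r ^ p / c) ^ (1 - β))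
      (α * (r ^ (α - 1) * (1 + r ^ p / c) ^ (-β)) -
        (p * β - α - p) / c * (r ^ (α + p - 1) * (1 + r ^ p / c) ^ (-β))) r := by
  have hA : 0 < 1 + r ^ p / c := by positivity
  have hdA : HasDerivAt (fun r : ℝ => 1 + r ^ p / c) (p * r ^ (p - 1) / c) r :=
    ((Real.hasDerivAt_rpow_const (.inl hr.ne')).div_const c).const_add 1
  refine ((Real.hasDerivAt_rpow_const (p := α) (.inl hr.ne')).mul
    (hdA.rpow_const (p := 1 - β) (.inl hA.ne'))).congr_deriv ?_
  have hAβ : (1 + r ^ p / c) ^ (1 - β) = (1 + r ^ p / c) * (1 + r ^ p / c) ^ (-β) := by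
    rw [sub_eq_add_neg, Real.rpow_add hA, Real.rpow_one]
  have hα : r ^ (α - 1) * r ^ p = r ^ (α + p - 1) := by
    rw [← Real.rpow_add hr]; ring_nf
  have hαp : r ^ α * r ^ (p - 1) = r ^ (α + p - 1) := by
    rw [← Real.rpow_add hr]; ring_nf
  rw [hAβ, sub_sub_cancel_left]
  linear_combination (α / c * (1 + r ^ p / c) ^ (-β)) * hα +
    (p * (1 - β) / c * (1 + r ^ p / c) ^ (-β)) * hαp

theorem integral_rpow_mul_one_add_rpow_div_rpow_neg {α β : ℝ} (hα : 0 < α) (hp : 0 < p)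
    (hc : 0 < c) (hαβ : α < p * (β - 1)) :
    α * ∫ r in Ioi 0, r ^ (α - 1) * (1 + r ^ p / c) ^ (-β) =
      (p * β - α - p) / c * ∫ r in Ioi 0, r ^ (α + p - 1) * (1 + r ^ p / c) ^ (-β) := by
  have hβ : 1 ≤ β := by nlinarith
  have hint₁ := integrableOn_rpow_mul_one_add_rpow_div_rpow_neg (p := p) (e := α - 1) hc
    (by linarith) (by linarith) (by linarith)
  have hint₂ := integrableOn_rpow_mul_one_add_rpow_div_rpow_neg (p := p) (e := α + p - 1) hc
    (by linarith) (by linarith) (by linarith)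
  have hcont : ContinuousWithinAt (fun r : ℝ => r ^ α * (1 + r ^ p / c) ^ (1 - β)) (Ici 0) 0 :=
    ((Real.continuousAt_rpow_const 0 α (.inr hα.le)).mul
      ((continuousAt_const.add ((Real.continuousAt_rpow_const 0 p (.inr hp.le)).div_const c)
        ).rpow_const (.inl (by simp [Real.zero_rpow hp.ne'])))).continuousWithinAt
  have hdecay : Tendsto (fun r : ℝ => r ^ α * (1 + r ^ p / c) ^ (1 - β)) atTop (𝓝 0) := by
    have hlim : Tendsto (fun r : ℝ => c ^ (β - 1) * r ^ (-(p * (β - 1) - α))) atTop (𝓝 0) := by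
      simpa only [mul_zero] using
        (tendsto_rpow_neg_atTop (y := p * (β - 1) - α) (by linarith)).const_mul (c ^ (β - 1))
    refine squeeze_zero' ((eventually_gt_atTop 0).mono fun r hr => by positivity)
      ((eventually_gt_atTop 0).mono fun r hr => ?_) hlim
    calc r ^ α * (1 + r ^ p / c) ^ (1 - β) ≤ r ^ α * (c ^ (β - 1) * r ^ (-(p * (β - 1)))) := by
          rw [← neg_sub]
          exact mul_le_mul_of_nonneg_left (one_add_rpow_div_rpow_neg_le hc hr (by linarith))
            (by positivity)
      _ = c ^ (β - 1) * r ^ (-(p * (β - 1) - α)) := by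
          rw [mul_left_comm, ← Real.rpow_add hr]; ring_nf
  have hFTC := integral_Ioi_of_hasDerivAt_of_tendsto hcont
    (fun r hr => hasDerivAt_rpow_mul_one_add_rpow_div_rpow hc hr)
    ((hint₁.const_mul α).sub (hint₂.const_mul _)) hdecay
  rw [integral_sub (hint₁.const_mul α) (hint₂.const_mul _), integral_const_mul, integral_const_mul,
    Real.zero_rpow hα.ne', zero_mul, sub_zero] at hFTC
  exact sub_eq_zero.1 hFTC

end PowerProfile

lemma EuclideanSpace.sum_sq_norm_apply_single {N : ℕ} (L : Euc N →L[ℝ] ℝ) :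
    ∑ i, ‖L (EuclideanSpace.single i 1)‖ ^ 2 = ‖L‖ ^ 2 := by
  obtain ⟨v, rfl⟩ := (InnerProductSpace.toDual ℝ (Euc N)).surjective L
  simp [EuclideanSpace.inner_single_right, EuclideanSpace.norm_sq_eq]

lemma sum_sq_norm_fderiv_apply_single_comp_norm_rpow {N : ℕ} {φ : ℝ → ℝ} {φ' p : ℝ} {x : Euc N}
    (hp : 1 < p) (hφ : HasDerivAt φ φ' (‖x‖ ^ p)) :
    ∑ i, ‖fderiv ℝ (fun y => φ (‖y‖ ^ p)) x (EuclideanSpace.single i 1)‖ ^ 2 =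
      (φ' * (p * ‖x‖ ^ (p - 2))) ^ 2 * ‖x‖ ^ 2 := by
  rw [HasFDerivAt.fderiv (f := fun y => φ (‖y‖ ^ p))
      (hφ.comp_hasFDerivAt x (hasFDerivAt_norm_rpow x hp)),
    EuclideanSpace.sum_sq_norm_apply_single, norm_smul, norm_smul, innerSL_apply_norm,
    Real.norm_eq_abs, Real.norm_eq_abs]
  simp only [mul_pow, sq_abs, mul_assoc]

lemma integral_norm_rpow_mul_comp_norm {E : Type*} [NormedAddCommGroup E] [NormedSpace ℝ E]
    [FiniteDimensional ℝ E] [Nontrivial E] [MeasurableSpace E] [BorelSpace E] (μ : Measure E)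
    [μ.IsAddHaarMeasure] (e : ℝ) (g : ℝ → ℝ) :
    ∫ x, ‖x‖ ^ e * g ‖x‖ ∂μ = Module.finrank ℝ E * μ.real (Metric.ball 0 1) *
      ∫ r in Ioi 0, r ^ ((Module.finrank ℝ E : ℝ) - 1 + e) * g r := by
  rw [integral_fun_norm_addHaar μ (fun r => r ^ e * g r), nsmul_eq_mul, smul_eq_mul, mul_assoc]
  congr 2
  refine setIntegral_congr_fun measurableSet_Ioi fun r (hr : 0 < r) => ?_
  rw [smul_eq_mul, ← mul_assoc, Real.rpow_add hr, ← Real.rpow_natCast,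
    Nat.cast_sub Module.finrank_pos, Nat.cast_one]

lemma energyCrit_eq_of_gradL2norm_sq_eq {N : ℕ} {b : ℝ} {f : Euc N → ℝ} (hNb : (N : ℝ) + b ≠ 0)
    (h : gradL2norm f ^ 2 = ∫ x, ‖x‖ ^ b * |f x| ^ ((2 * (N : ℝ) + 2 * b) / ((N : ℝ) - 2))) :
    energyCrit N b f = (b + 2) / (2 * (N : ℝ) + 2 * b) * gradL2norm f ^ 2 := by
  rw [energyCrit, ← h]
  field_simp
  ring

section GroundState

variable {N : ℕ} {b : ℝ}

lemma sum_sq_norm_fderiv_Wfun (hN : 3 ≤ N) (hb : 0 < b) (x : Euc N) :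
    ∑ i, ‖fderiv ℝ (Wfun N b) x (EuclideanSpace.single i 1)‖ ^ 2 =
      ‖x‖ ^ (2 * b + 2) * (1 + ‖x‖ ^ (2 + b) / (((N : ℝ) + b) * ((N : ℝ) - 2))) ^
        (-(2 * ((N : ℝ) + b) / (2 + b))) / ((N : ℝ) + b) ^ 2 := by
  have hN₂ : (0 : ℝ) < N - 2 := by linarith [show (3 : ℝ) ≤ N by exact_mod_cast hN]
  set c : ℝ := ((N : ℝ) + b) * ((N : ℝ) - 2) with hc
  set q : ℝ := -(((N : ℝ) - 2) / (2 + b)) with hq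
  set A : ℝ := 1 + ‖x‖ ^ (2 + b) / c
  have hA : 0 < A := by positivity
  have hφ : HasDerivAt (fun s : ℝ => (1 + s / c) ^ q) (1 / c * q * A ^ (q - 1)) (‖x‖ ^ (2 + b)) :=
    ((hasDerivAt_id _).div_const c).const_add 1 |>.rpow_const (.inl hA.ne')
  rw [show Wfun N b = fun y => (1 + ‖y‖ ^ (2 + b) / c) ^ q from rfl,
    sum_sq_norm_fderiv_apply_single_comp_norm_rpow (by linarith) hφ, add_sub_cancel_left]
  have hcoef : (1 / c * q * (2 + b)) ^ 2 = 1 / ((N : ℝ) + b) ^ 2 := by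
    rw [hq, hc]
    field_simp
  have hAq : (A ^ (q - 1)) ^ 2 = A ^ (-(2 * ((N : ℝ) + b) / (2 + b))) := by
    rw [← Real.rpow_natCast, ← Real.rpow_mul hA.le, hq]
    congr 1
    field_simp
    ring
  have hx : (‖x‖ ^ b) ^ 2 * ‖x‖ ^ 2 = ‖x‖ ^ (2 * b + 2) := by
    rw [← Real.rpow_natCast, ← Real.rpow_natCast, ← Real.rpow_mul (norm_nonneg x),
      ← Real.rpow_add' (norm_nonneg x) (by positivity)]
    norm_num [mul_comm]
  rw [← hAq, ← hx]
  linear_combination ((A ^ (q - 1)) ^ 2 * (‖x‖ ^ b) ^ 2 * ‖x‖ ^ 2) * hcoef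

lemma Wfun_rpow (hN : 3 ≤ N) (hb : 0 < b) (x : Euc N) :
    Wfun N b x ^ ((2 * (N : ℝ) + 2 * b) / ((N : ℝ) - 2)) =
      (1 + ‖x‖ ^ (2 + b) / (((N : ℝ) + b) * ((N : ℝ) - 2))) ^ (-(2 * ((N : ℝ) + b) / (2 + b))) := by
  have hN₂ : (0 : ℝ) < N - 2 := by linarith [show (3 : ℝ) ≤ N by exact_mod_cast hN]
  rw [Wfun, ← Real.rpow_mul (by positivity)]
  congr 1
  field_simp

lemma Wfun_nonneg (hN : 3 ≤ N) (hb : 0 < b) (x : Euc N) : 0 ≤ Wfun N b x := by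
  have hN₂ : (0 : ℝ) < N - 2 := by linarith [show (3 : ℝ) ≤ N by exact_mod_cast hN]
  unfold Wfun
  positivity

lemma gradL2norm_Wfun_sq (hN : 3 ≤ N) (hb : 0 < b) :
    gradL2norm (Wfun N b) ^ 2 =
      ∫ x : Euc N, ‖x‖ ^ b * Wfun N b x ^ ((2 * (N : ℝ) + 2 * b) / ((N : ℝ) - 2)) := by
  have hN₂ : (0 : ℝ) < N - 2 := by linarith [show (3 : ℝ) ≤ N by exact_mod_cast hN]
  have hNb : (0 : ℝ) < N + b := by positivity
  have : Nonempty (Fin N) := ⟨⟨0, by omega⟩⟩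
  set c : ℝ := ((N : ℝ) + b) * ((N : ℝ) - 2) with hc
  set β : ℝ := 2 * ((N : ℝ) + b) / (2 + b) with hβ
  have hradial : ∫ r in Ioi 0, r ^ ((N : ℝ) - 1 + (2 * b + 2)) * (1 + r ^ (2 + b) / c) ^ (-β) =
      (N + b) ^ 2 * ∫ r in Ioi 0, r ^ ((N : ℝ) - 1 + b) * (1 + r ^ (2 + b) / c) ^ (-β) := by
    have hibp := integral_rpow_mul_one_add_rpow_div_rpow_neg (α := N + b) (p := 2 + b) (c := c)
      (β := β) hNb (by positivity) (by positivity) (by rw [hβ]; field_simp; linarith)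
    have hcoef : ((2 + b) * β - (N + b) - (2 + b)) / c = 1 / ((N : ℝ) + b) := by
      rw [hβ, hc]; field_simp; ring
    rw [hcoef, show (N : ℝ) + b + (2 + b) - 1 = N - 1 + (2 * b + 2) by ring,
      show (N : ℝ) + b - 1 = N - 1 + b by ring, one_div_mul_eq_div, eq_div_iff hNb.ne'] at hibp
    rw [← hibp]
    ring
  rw [gradL2norm, Real.sq_sqrt (integral_nonneg fun x => by positivity),
    integral_congr_ae (.of_forall (sum_sq_norm_fderiv_Wfun hN hb)), integral_div]
  simp_rw [Wfun_rpow hN hb]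
  rw [integral_norm_rpow_mul_comp_norm volume (2 * b + 2) fun r => (1 + r ^ (2 + b) / c) ^ (-β),
    integral_norm_rpow_mul_comp_norm volume b fun r => (1 + r ^ (2 + b) / c) ^ (-β),
    finrank_euclideanSpace_fin, hradial]
  field_simp

end GroundState

/-- Pohozaev-type identity and energy of the energy-critical ground state `W`
(Corollary 5.7 of the paper). -/
theorem Wfun_energy_identities (N : ℕ) (b : ℝ) (hN : 3 ≤ N) (hb : 0 < b) :
    gradL2norm (Wfun N b) ^ 2 =
        (∫ x : Euc N, ‖x‖ ^ b * Wfun N b x ^ ((2 * (N : ℝ) + 2 * b) / ((N : ℝ) - 2))) ∧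
      energyCrit N b (Wfun N b) =
        ((b + 2) / (2 * (N : ℝ) + 2 * b)) * gradL2norm (Wfun N b) ^ 2 := by
  have hpohozaev := gradL2norm_Wfun_sq hN hb
  refine ⟨hpohozaev, energyCrit_eq_of_gradL2norm_sq_eq (by positivity) ?_⟩
  simpa only [abs_of_nonneg (Wfun_nonneg hN hb _)] using hpohozaev
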